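/- For every fixed n ≥ 1, the average number of blocks of the outermost partition of an m-th order partition of an n-element set tends to 1 as m → ∞; that is, A_n^(m) := (1/B_n^(m)) · Σ_{k=1}^n k · S^(m)(n,k) satisfies lim_{m→∞} A_n^(m) = 1. -/

import Mathlib

/-- `m`-th order ("hyper") partitions of a finite set `s`:
a chain `(P₁, …, P_m)` where `P₁` is a partition of `s` and each `P_{j+1}`
is a partition of the set of blocks of `P_j`. For `m = 0` it is `s` itself
(a single trivial object). -/
def HyperPartition : (m : ℕ) → {α : Type} → [DecidableEq α] → Finset α → Type
  | 0, _, _, _ => PUnit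
  | m + 1, _, _, s => (P : Finpartition s) × HyperPartition m P.parts

/-- The number of blocks of the outermost partition of a hyper partition
(for `m = 0`, by convention, the cardinality of the underlying set). -/
def HyperPartition.outerBlocks :
    (m : ℕ) → {α : Type} → [DecidableEq α] → {s : Finset α} →
      HyperPartition m s → ℕ
  | 0, _, _, s, _ => s.card
  | 1, _, _, _, p => p.1.parts.card
  | m + 2, _, _, _, p => HyperPartition.outerBlocks (m + 1) p.2

/-- `|℘ₙ^(m)|`: the number of `m`-th order partitions of an `n`-element set. -/
noncomputable def hyperBell (m n : ℕ) : ℕ :=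
  Nat.card (HyperPartition m (Finset.univ : Finset (Fin n)))

/-- The `m`-th order Stirling number `S^(m)(n,k)`: the number of `m`-th order
partitions of an `n`-element set whose outermost partition has exactly `k` blocks. -/
noncomputable def hyperStirling (m n k : ℕ) : ℕ :=
  Nat.card {p : HyperPartition m (Finset.univ : Finset (Fin n)) //
    HyperPartition.outerBlocks m p = k}

/-- The ordinary Stirling number of the second kind `S(n,k)`: the number of
set partitions of an `n`-element set into exactly `k` blocks. -/
noncomputable def stirling (n k : ℕ) : ℕ :=
  Nat.card {P : Finpartition (Finset.univ : Finset (Fin n)) // P.parts.card = k}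

/-- Composition `f(g(x))` of formal power series (intended for `g` with zero
constant term, in which case `coeff n (g ^ i) = 0` for `i > n`). -/
noncomputable def psComp (f g : PowerSeries ℚ) : PowerSeries ℚ :=
  PowerSeries.mk fun n =>
    PowerSeries.coeff (R := ℚ) n
      (∑ i ∈ Finset.range (n + 1), PowerSeries.C (R := ℚ) (PowerSeries.coeff (R := ℚ) i f) * g ^ i)

/-- The iterated exponential series: `E₀ = exp x`, `E_{m+1} = exp (E_m - 1)`. -/
noncomputable def E : ℕ → PowerSeries ℚ
  | 0 => PowerSeries.exp ℚ
  | m + 1 => psComp (PowerSeries.exp ℚ) (E m - 1)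

/-- The `m`-th order Bell number `Bₙ^(m) = n! · [xⁿ] E_m(x)`. -/
noncomputable def bell (m n : ℕ) : ℚ :=
  (n.factorial : ℚ) * PowerSeries.coeff (R := ℚ) n (E m)

/-!
Classifying chains by their innermost partition gives `S⁽ᵐ⁺¹⁾(n,k) = ∑ⱼ S(n,j) S⁽ᵐ⁾(j,k)`:
`S⁽ᵐ⁾` is the `m`-th power of the unitriangular matrix of Stirling numbers. On the analytic side
`n! [xⁿ] (E_m - 1)ᵏ = k! S⁽ᵐ⁺¹⁾(n,k)`, by induction on `m` through `E_{m+1} = exp ∘ (E_m - 1)`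
and the exponential generating function `(eˣ - 1)ᵏ / k!` of `S(·,k)`; hence
`Bₙ⁽ᵐ⁾ = ∑ₖ S⁽ᵐ⁾(n,k)`.

Being a power of a unipotent matrix, `S⁽ᵐ⁾(n,k)` grows polynomially in `m`, of degree `n - k`:
it is at most `(c (m + 1))ⁿ⁻ᵏ`, while `S⁽ᵐ⁾(n,1) ≥ (m choose n - 1)`. So every `S⁽ᵐ⁾(n,k)` with
`k ≥ 2` is `o(S⁽ᵐ⁾(n,1))`, and the average number of outer blocks tends to `1`.
-/

open Finset
open Nat (stirlingSecond)

namespace Finpartition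

variable {α : Type*} [DecidableEq α] {s : Finset α} {a : α}

def insertSingleton (Q : Finpartition s) (ha : a ∉ s) : Finpartition (insert a s) :=
  Q.extend (singleton_ne_empty a) (disjoint_singleton_right.2 ha)
    (by rw [sup_eq_union, union_comm, ← insert_eq])

def insertIntoPart (Q : Finpartition s) {c : Finset α} (hc : c ∈ Q.parts) (ha : a ∉ s) :
    Finpartition (insert a s) where
  parts := insert (insert a c) (Q.parts.erase c)
  supIndep := by
    rw [supIndep_iff_pairwiseDisjoint]
    have key : ∀ d ∈ Q.parts.erase c, Disjoint (insert a c) d := fun d hd =>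
      disjoint_insert_left.2 ⟨fun h => ha (Q.subset (mem_of_mem_erase hd) h),
        Q.disjoint hc (mem_of_mem_erase hd) (ne_of_mem_erase hd).symm⟩
    rintro x hx y hy hxy
    simp only [coe_insert, Set.mem_insert_iff, mem_coe] at hx hy
    rcases hx with rfl | hx <;> rcases hy with rfl | hy
    · exact absurd rfl hxy
    · exact key y hy
    · exact (key x hx).symm
    · exact Q.disjoint (mem_of_mem_erase hx) (mem_of_mem_erase hy) hxy
  sup_parts := by
    have h := Q.sup_parts
    rw [← insert_erase hc, sup_insert] at h
    simpa only [sup_insert, sup_eq_union, id, insert_union] using congrArg (insert a) h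
  bot_notMem h := by
    rcases mem_insert.1 h with h | h
    · exact insert_ne_empty a c h.symm
    · exact Q.bot_notMem (mem_of_mem_erase h)

theorem parts_insertIntoPart (Q : Finpartition s) {c : Finset α} (hc : c ∈ Q.parts) (ha : a ∉ s) :
    (Q.insertIntoPart hc ha).parts = insert (insert a c) (Q.parts.erase c) := rfl

theorem part_insertSingleton (Q : Finpartition s) (ha : a ∉ s) :
    (Q.insertSingleton ha).part a = {a} :=
  (Q.insertSingleton ha).part_eq_of_mem (mem_insert_self _ _) (mem_singleton_self a)

theorem part_insertIntoPart (Q : Finpartition s) {c : Finset α} (hc : c ∈ Q.parts) (ha : a ∉ s) :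
    (Q.insertIntoPart hc ha).part a = insert a c :=
  (Q.insertIntoPart hc ha).part_eq_of_mem (mem_insert_self _ _) (mem_insert_self a c)

theorem erase_part_insertSingleton (Q : Finpartition s) (ha : a ∉ s) :
    (Q.insertSingleton ha).parts.erase {a} = Q.parts :=
  erase_insert fun h => ha (Q.subset h (mem_singleton_self a))

theorem erase_part_insertIntoPart (Q : Finpartition s) {c : Finset α} (hc : c ∈ Q.parts)
    (ha : a ∉ s) : (Q.insertIntoPart hc ha).parts.erase (insert a c) = Q.parts.erase c :=
  erase_insert fun h => ha (Q.subset (mem_of_mem_erase h) (mem_insert_self a c))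

theorem card_parts_insertSingleton (Q : Finpartition s) (ha : a ∉ s) :
    #(Q.insertSingleton ha).parts = #Q.parts + 1 :=
  card_insert_of_notMem fun h => ha (Q.subset h (mem_singleton_self a))

theorem card_parts_insertIntoPart (Q : Finpartition s) {c : Finset α} (hc : c ∈ Q.parts)
    (ha : a ∉ s) : #(Q.insertIntoPart hc ha).parts = #Q.parts := by
  rw [parts_insertIntoPart, card_insert_of_notMem fun h =>
    ha (Q.subset (mem_of_mem_erase h) (mem_insert_self a c)), card_erase_add_one hc]

theorem insert_ne_singleton_of_mem_parts (Q : Finpartition s) {c : Finset α} (hc : c ∈ Q.parts)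
    (ha : a ∉ s) : insert a c ≠ {a} := by
  intro h
  obtain ⟨x, hx⟩ := Q.nonempty_of_mem_parts hc
  have hxa : x = a := mem_singleton.1 (h ▸ mem_insert_of_mem hx)
  exact ha (Q.subset hc (hxa ▸ hx))

/-- The bijection behind `S(n + 1, k + 1) = (k + 1) S(n, k + 1) + S(n, k)`. -/
def insertPoint (ha : a ∉ s) (k : ℕ) :
    (Σ Q : {Q : Finpartition s // #Q.parts = k + 1}, Q.1.parts) ⊕
        {Q : Finpartition s // #Q.parts = k} →
      {P : Finpartition (insert a s) // #P.parts = k + 1}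
  | .inl ⟨Q, c⟩ => ⟨Q.1.insertIntoPart c.2 ha, (card_parts_insertIntoPart _ _ _).trans Q.2⟩
  | .inr Q => ⟨Q.1.insertSingleton ha, by rw [card_parts_insertSingleton, Q.2]⟩

theorem insertPoint_injective (ha : a ∉ s) (k : ℕ) : Function.Injective (insertPoint ha k) := by
  rintro (⟨⟨Q, hQ⟩, ⟨c, hc⟩⟩ | ⟨Q, hQ⟩) (⟨⟨Q', hQ'⟩, ⟨c', hc'⟩⟩ | ⟨Q', hQ'⟩) h <;>
    have hpart := congrArg (fun P => P.1.part a) h <;>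
    have hrest := congrArg (fun P => P.1.parts.erase (P.1.part a)) h <;>
    simp only [insertPoint, part_insertIntoPart, part_insertSingleton] at hpart hrest
  · obtain rfl : c = c' := by
      rw [← erase_insert fun h => ha (Q.subset hc h), hpart,
        erase_insert fun h => ha (Q'.subset hc' h)]
    rw [erase_part_insertIntoPart, erase_part_insertIntoPart] at hrest
    obtain rfl : Q = Q' := Finpartition.ext <| by rw [← insert_erase hc, hrest, insert_erase hc']
    rfl
  · exact absurd hpart (Q.insert_ne_singleton_of_mem_parts hc ha)
  · exact absurd hpart.symm (Q'.insert_ne_singleton_of_mem_parts hc' ha)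
  · rw [erase_part_insertSingleton, erase_part_insertSingleton] at hrest
    obtain rfl : Q = Q' := Finpartition.ext hrest
    rfl

theorem parts_avoid_singleton {t : Finset α} (P : Finpartition t) (hat : a ∈ t) :
    (P.avoid {a}).parts = (insert ((P.part a).erase a) (P.parts.erase (P.part a))).erase ∅ := by
  have hb := P.part_mem.2 hat
  show (P.parts.image (· \ {a})).erase ∅ = _
  conv_lhs => rw [← insert_erase hb, image_insert, sdiff_singleton_eq_erase]
  rw [image_congr (g := id), image_id]
  intro d hd
  simp only [sdiff_singleton_eq_erase, id]
  rw [erase_eq_of_notMem]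
  exact fun had => ne_of_mem_erase hd (P.part_eq_of_mem (mem_of_mem_erase hd) had).symm

theorem insertPoint_surjective (ha : a ∉ s) (k : ℕ) : Function.Surjective (insertPoint ha k) := by
  rintro ⟨P, hP⟩
  have has : a ∈ insert a s := mem_insert_self a s
  set b := P.part a
  have hb : b ∈ P.parts := P.part_mem.2 has
  let Q := (P.avoid {a}).copy (by rw [sdiff_singleton_eq_erase, erase_insert ha])
  have hQ : Q.parts = (insert (b.erase a) (P.parts.erase b)).erase ∅ := P.parts_avoid_singleton has
  have hcard : #(P.parts.erase b) = k := by rw [card_erase_of_mem hb, hP, Nat.add_sub_cancel]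
  by_cases hba : b = {a}
  · have hQ' : Q.parts = P.parts.erase b := by
      rw [hQ, hba, erase_singleton, erase_insert fun h => P.empty_notMem_parts (mem_of_mem_erase h)]
    refine ⟨.inr ⟨Q, hQ' ▸ hcard⟩, Subtype.ext (Finpartition.ext ?_)⟩
    show insert {a} Q.parts = P.parts
    rw [hQ', ← hba, insert_erase hb]
  · set c := b.erase a
    have hc : c ≠ ∅ := fun h => by
      rcases (erase_eq_empty_iff b a).1 h with h | h
      · exact P.empty_notMem_parts (h ▸ hb)
      · exact hba h
    have hcb : c ∉ P.parts.erase b := fun h =>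
      hc (disjoint_self_iff_empty c |>.1 <|
        (P.disjoint (mem_of_mem_erase h) hb (ne_of_mem_erase h)).mono_right (erase_subset a b))
    have hQ' : Q.parts = insert c (P.parts.erase b) := by
      refine hQ.trans (erase_eq_of_notMem ?_)
      rw [mem_insert, not_or]
      exact ⟨hc.symm, fun h => P.empty_notMem_parts (mem_of_mem_erase h)⟩
    have hcQ : c ∈ Q.parts := hQ' ▸ mem_insert_self c _
    refine ⟨.inl ⟨⟨Q, by rw [hQ', card_insert_of_notMem hcb, hcard]⟩, ⟨c, hcQ⟩⟩,
      Subtype.ext (Finpartition.ext ?_)⟩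
    show insert (insert a c) (Q.parts.erase c) = P.parts
    rw [hQ', erase_insert hcb, insert_erase (P.mem_part_self.2 has), insert_erase hb]

theorem card_insert_parts_eq_succ (ha : a ∉ s) (k : ℕ) :
    Nat.card {P : Finpartition (insert a s) // #P.parts = k + 1} =
      (k + 1) * Nat.card {Q : Finpartition s // #Q.parts = k + 1} +
        Nat.card {Q : Finpartition s // #Q.parts = k} := by
  rw [← Nat.card_eq_of_bijective _ ⟨insertPoint_injective ha k, insertPoint_surjective ha k⟩,
    Nat.card_sum, Nat.card_sigma]
  simp only [Nat.card_eq_fintype_card, Fintype.card_coe]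
  rw [sum_const_nat fun Q _ => Q.2, card_univ, mul_comm]

theorem card_eq_stirlingSecond (s : Finset α) (k : ℕ) :
    Nat.card {P : Finpartition s // #P.parts = k} = stirlingSecond #s k := by
  induction s using Finset.induction_on generalizing k with
  | empty =>
    have hP (P : Finpartition (∅ : Finset α)) : #P.parts = 0 := by
      rw [card_eq_zero, P.parts_eq_empty_iff]; rfl
    cases k with
    | zero =>
      have : Unique (Finpartition (∅ : Finset α)) :=
        inferInstanceAs (Unique (Finpartition (⊥ : Finset α)))
      rw [card_empty, Nat.stirlingSecond_zero, Nat.card_eq_one_iff_unique]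
      exact ⟨inferInstance, ⟨⟨default, hP _⟩⟩⟩
    | succ k =>
      rw [card_empty, Nat.stirlingSecond_zero_succ, Nat.card_eq_zero]
      exact .inl ⟨fun P => absurd P.2 (by rw [hP]; omega)⟩
  | insert a s ha ih =>
    cases k with
    | zero =>
      rw [card_insert_of_notMem ha, Nat.stirlingSecond_succ_zero, Nat.card_eq_zero]
      refine .inl ⟨fun P => insert_ne_empty a s ?_⟩
      rw [← bot_eq_empty, ← P.1.parts_eq_empty_iff, ← card_eq_zero, P.2]
    | succ k =>
      rw [card_insert_parts_eq_succ ha, ih, ih, card_insert_of_notMem ha,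
        Nat.stirlingSecond_succ_succ]

end Finpartition

namespace HyperPartition

instance finite : ∀ (m : ℕ) {α : Type} [DecidableEq α] (s : Finset α),
    Finite (HyperPartition m s)
  | 0, _, _, _ => inferInstanceAs (Finite PUnit)
  | m + 1, _, _, s =>
    have := fun P : Finpartition s => finite m P.parts
    inferInstanceAs (Finite ((P : Finpartition s) × HyperPartition m P.parts))

variable {α : Type} [DecidableEq α]

theorem outerBlocks_succ (m : ℕ) {s : Finset α} (P : Finpartition s)
    (p : HyperPartition m P.parts) :
    outerBlocks (m + 1) (show HyperPartition (m + 1) s from ⟨P, p⟩) = outerBlocks m p := by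
  cases m <;> rfl

theorem card_outerBlocks_zero (s : Finset α) (k : ℕ) :
    Nat.card {p : HyperPartition 0 s // outerBlocks 0 p = k} = if #s = k then 1 else 0 := by
  split_ifs with h
  · exact Nat.card_eq_one_iff_unique.2 ⟨⟨fun _ _ => Subtype.ext rfl⟩, ⟨⟨PUnit.unit, h⟩⟩⟩
  · exact Nat.card_eq_zero.2 (.inl ⟨fun p => h p.2⟩)

theorem card_outerBlocks_succ {m k : ℕ}
    (ih : ∀ (t : Finset (Finset α)), Nat.card {p : HyperPartition m t // outerBlocks m p = k} =
      hyperStirling m #t k) (s : Finset α) :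
    Nat.card {p : HyperPartition (m + 1) s // outerBlocks (m + 1) p = k} =
      ∑ j ∈ range (#s + 1), stirlingSecond #s j * hyperStirling m j k := by
  let e : {p : HyperPartition (m + 1) s // outerBlocks (m + 1) p = k} ≃
      Σ P : Finpartition s, {p : HyperPartition m P.parts // outerBlocks m p = k} :=
    { toFun := fun p => ⟨p.1.1, p.1.2, (outerBlocks_succ m _ _).symm.trans p.2⟩
      invFun := fun p => ⟨⟨p.1, p.2.1⟩, (outerBlocks_succ m _ _).trans p.2.2⟩
      left_inv := fun _ => rfl
      right_inv := fun _ => rfl }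
  rw [Nat.card_congr e, Nat.card_sigma]
  simp only [ih]
  rw [← sum_fiberwise_of_maps_to (t := range (#s + 1)) (g := fun P : Finpartition s => #P.parts)
    fun P _ => mem_range.2 (Nat.lt_succ_of_le P.card_parts_le_card)]
  refine sum_congr rfl fun j _ => ?_
  rw [sum_congr rfl fun P hP => by rw [(mem_filter.1 hP).2], sum_const, smul_eq_mul,
    ← Finpartition.card_eq_stirlingSecond, Nat.card_eq_fintype_card, Fintype.card_subtype]

theorem card_outerBlocks_eq_hyperStirling (m : ℕ) :
    ∀ {α : Type} [DecidableEq α] (s : Finset α) (k : ℕ),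
      Nat.card {p : HyperPartition m s // outerBlocks m p = k} = hyperStirling m #s k := by
  induction m with
  | zero =>
    intro α _ s k
    rw [hyperStirling, card_outerBlocks_zero, card_outerBlocks_zero, card_univ, Fintype.card_fin]
  | succ m ih =>
    intro α _ s k
    rw [hyperStirling, card_outerBlocks_succ (ih · k), card_outerBlocks_succ (ih · k), card_univ,
      Fintype.card_fin]

end HyperPartition

theorem hyperStirling_zero (n k : ℕ) : hyperStirling 0 n k = if n = k then 1 else 0 := by
  rw [hyperStirling, HyperPartition.card_outerBlocks_zero, card_univ, Fintype.card_fin]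

theorem hyperStirling_succ (m n k : ℕ) :
    hyperStirling (m + 1) n k = ∑ j ∈ range (n + 1), stirlingSecond n j * hyperStirling m j k := by
  rw [hyperStirling, HyperPartition.card_outerBlocks_succ
    (HyperPartition.card_outerBlocks_eq_hyperStirling m · k), card_univ, Fintype.card_fin]

theorem hyperStirling_eq_zero_of_lt (m : ℕ) {n k : ℕ} (h : n < k) : hyperStirling m n k = 0 := by
  induction m generalizing n with
  | zero => rw [hyperStirling_zero, if_neg h.ne]
  | succ m ih =>
    rw [hyperStirling_succ]
    exact sum_eq_zero fun j hj => by
      rw [ih ((Nat.lt_succ_iff.1 (mem_range.1 hj)).trans_lt h), mul_zero]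

theorem hyperStirling_one (n k : ℕ) : hyperStirling 1 n k = stirlingSecond n k := by
  simp only [hyperStirling_succ, hyperStirling_zero, mul_ite, mul_one, mul_zero, sum_ite_eq',
    mem_range]
  split_ifs with h
  · rfl
  · rw [Nat.stirlingSecond_eq_zero_of_lt (by omega)]

/-- Peeling off the outermost partition instead of the innermost one. -/
theorem hyperStirling_succ' (m n k : ℕ) :
    hyperStirling (m + 1) n k = ∑ i ∈ range (n + 1), hyperStirling m n i * stirlingSecond i k := by
  induction m generalizing n k with
  | zero => simp [hyperStirling_one, hyperStirling_zero]
  | succ m ih =>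
    calc hyperStirling (m + 1 + 1) n k
        = ∑ j ∈ range (n + 1), stirlingSecond n j *
            ∑ i ∈ range (n + 1), hyperStirling m j i * stirlingSecond i k := by
          rw [hyperStirling_succ]
          refine sum_congr rfl fun j hj => ?_
          rw [ih, sum_subset (range_subset_range.2 (mem_range.1 hj))]
          intro i _ hi
          rw [hyperStirling_eq_zero_of_lt m (by simp_all), zero_mul]
      _ = ∑ i ∈ range (n + 1), hyperStirling (m + 1) n i * stirlingSecond i k := by
          simp_rw [hyperStirling_succ, mul_sum, sum_mul, mul_assoc]
          exact sum_comm

theorem hyperStirling_self (m n : ℕ) : hyperStirling m n n = 1 := by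
  induction m with
  | zero => rw [hyperStirling_zero, if_pos rfl]
  | succ m ih =>
    rw [hyperStirling_succ', sum_eq_single n, ih, Nat.stirlingSecond_self, one_mul]
    · intro i hi hin
      rw [Nat.stirlingSecond_eq_zero_of_lt (by simp at hi; omega), mul_zero]
    · simp

theorem hyperStirling_zero_right (m : ℕ) {n : ℕ} (hn : n ≠ 0) : hyperStirling m n 0 = 0 := by
  induction m with
  | zero => rw [hyperStirling_zero, if_neg hn]
  | succ m ih =>
    rw [hyperStirling_succ']
    refine sum_eq_zero fun i _ => ?_
    rcases i with _ | i
    · rw [ih, zero_mul]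
    · rw [Nat.stirlingSecond_succ_zero, mul_zero]

theorem choose_le_hyperStirling (m : ℕ) {n j : ℕ} (hj : 1 ≤ j) (hjn : j ≤ n) :
    m.choose (n - j) ≤ hyperStirling m n j := by
  induction m generalizing j with
  | zero =>
    rcases hjn.eq_or_lt with rfl | hlt
    · simp [hyperStirling_self]
    · simp [Nat.choose_eq_zero_of_lt (show 0 < n - j by omega)]
  | succ m ih =>
    rcases hjn.eq_or_lt with rfl | hlt
    · simp [hyperStirling_self]
    obtain ⟨d, hd⟩ : ∃ d, n - j = d + 1 := ⟨n - j - 1, by omega⟩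
    have hS : 1 ≤ stirlingSecond (j + 1) j := by
      rw [Nat.stirlingSecond_succ_self_left]
      exact Nat.choose_pos (by omega)
    calc (m + 1).choose (n - j) = m.choose (n - j) + m.choose (n - (j + 1)) := by
          rw [hd, Nat.choose_succ_succ', add_comm, show n - (j + 1) = d by omega]
      _ ≤ hyperStirling m n j * stirlingSecond j j +
          hyperStirling m n (j + 1) * stirlingSecond (j + 1) j := by
          rw [Nat.stirlingSecond_self, mul_one]
          gcongr
          · exact ih hj hjn
          · exact (ih (by omega) hlt).trans (Nat.le_mul_of_pos_right _ hS)
      _ ≤ hyperStirling (m + 1) n j := by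
          rw [hyperStirling_succ']
          refine (sum_pair (f := fun i => hyperStirling m n i * stirlingSecond i j)
            (by omega)).symm.trans_le (sum_le_sum_of_subset fun i => ?_)
          simp only [mem_insert, mem_singleton, mem_range]
          omega

theorem exists_hyperStirling_le_pow (n : ℕ) :
    ∃ c : ℕ, ∀ m k, k ≤ n → hyperStirling m n k ≤ (c * (m + 1)) ^ (n - k) := by
  set c := ∑ i ∈ range (n + 1), ∑ j ∈ range (n + 1), stirlingSecond i j
  have hcol : ∀ k ≤ n, ∑ i ∈ range (n + 1), stirlingSecond i k ≤ c := fun k hk =>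
    sum_le_sum fun i _ => single_le_sum (fun j _ => Nat.zero_le _) (mem_range.2 (by omega))
  have hc : 0 < c := (hcol 0 (Nat.zero_le n)).trans_lt' <|
    (single_le_sum (fun i _ => Nat.zero_le _) (mem_range.2 n.succ_pos)).trans_lt' (by simp)
  refine ⟨c, fun m => ?_⟩
  induction m with
  | zero =>
    intro k hk
    rw [hyperStirling_zero]
    split_ifs with h
    · simp [h]
    · exact Nat.zero_le _
  | succ m ih =>
    intro k hk
    rcases hk.eq_or_lt with rfl | hlt
    · simp [hyperStirling_self]
    obtain ⟨d, hd⟩ : ∃ d, n - k = d + 1 := ⟨n - k - 1, by omega⟩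
    have hterm : ∀ i ∈ (range (n + 1)).erase k,
        hyperStirling m n i * stirlingSecond i k ≤ (c * (m + 1)) ^ d * stirlingSecond i k := by
      intro i hi
      obtain ⟨hik, hi⟩ := mem_erase.1 hi
      rcases lt_or_gt_of_ne hik with h | h
      · rw [Nat.stirlingSecond_eq_zero_of_lt h, mul_zero, mul_zero]
      · gcongr
        exact (ih i (by simp at hi; omega)).trans (Nat.pow_le_pow_right (by positivity) (by omega))
    have hpow : (m + 1) ^ (d + 1) + (m + 1) ^ d ≤ (m + 2) ^ (d + 1) :=
      calc (m + 1) ^ (d + 1) + (m + 1) ^ d = (m + 1) ^ d * (m + 2) := by ring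
        _ ≤ (m + 2) ^ d * (m + 2) := by gcongr; omega
        _ = (m + 2) ^ (d + 1) := by ring
    calc hyperStirling (m + 1) n k
        = hyperStirling m n k * 1 +
            ∑ i ∈ (range (n + 1)).erase k, hyperStirling m n i * stirlingSecond i k := by
          rw [hyperStirling_succ', ← add_sum_erase _ _ (mem_range.2 (by omega : k < n + 1)),
            Nat.stirlingSecond_self]
      _ ≤ (c * (m + 1)) ^ (d + 1) + (c * (m + 1)) ^ d * c := by
          rw [mul_one, ← hd]
          gcongr
          · exact ih k hk
          · calc ∑ i ∈ (range (n + 1)).erase k, hyperStirling m n i * stirlingSecond i k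
                ≤ ∑ i ∈ range (n + 1), (c * (m + 1)) ^ d * stirlingSecond i k :=
                  (sum_le_sum hterm).trans (sum_le_sum_of_subset (erase_subset _ _))
              _ ≤ (c * (m + 1)) ^ d * c := by
                rw [← mul_sum]
                exact Nat.mul_le_mul_left _ (hcol k hk)
      _ = c ^ (d + 1) * ((m + 1) ^ (d + 1) + (m + 1) ^ d) := by rw [mul_pow, mul_pow]; ring
      _ ≤ (c * (m + 1 + 1)) ^ (n - k) := by rw [hd, mul_pow]; gcongr

open PowerSeries
open scoped Nat

theorem PowerSeries.coeff_subst_eq_sum_range {R : Type*} [CommRing R] {f g : R⟦X⟧}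
    (hg : constantCoeff g = 0) (n : ℕ) :
    coeff n (f.subst g) = ∑ i ∈ range (n + 1), coeff i f * coeff n (g ^ i) := by
  rw [coeff_subst' (HasSubst.of_constantCoeff_zero' hg),
    finsum_eq_sum_of_support_subset (s := range (n + 1))]
  · simp only [smul_eq_mul]
  · intro i hi
    rw [coe_range, Set.mem_Iio]
    by_contra h
    refine hi ?_
    show coeff i f • coeff n (g ^ i) = 0
    rw [coeff_of_lt_order n ((Nat.cast_lt.2 (by omega)).trans_le
      (le_order_pow_of_constantCoeff_eq_zero i hg)), smul_zero]

theorem psComp_eq_subst {f g : ℚ⟦X⟧} (hg : constantCoeff g = 0) : psComp f g = f.subst g := by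
  ext n
  simp [psComp, coeff_subst_eq_sum_range hg, map_sum, coeff_C_mul]

theorem constantCoeff_E_sub_one (m : ℕ) : constantCoeff (E m - 1) = 0 := by
  rw [map_sub, map_one, sub_eq_zero]
  cases m with
  | zero => exact constantCoeff_exp
  | succ m => rw [← coeff_zero_eq_constantCoeff_apply]; simp [E, psComp]

theorem E_succ (m : ℕ) : E (m + 1) = (exp ℚ).subst (E m - 1) :=
  psComp_eq_subst (constantCoeff_E_sub_one m)

theorem factorial_mul_coeff_exp_sub_one_pow (n k : ℕ) :
    (n ! : ℚ) * coeff n ((exp ℚ - 1) ^ k) = k ! * stirlingSecond n k := by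
  induction n generalizing k with
  | zero => cases k <;> simp
  | succ n ih =>
    cases k with
    | zero => simp [coeff_one]
    | succ k =>
      have hderiv : d⁄dX ℚ ((exp ℚ - 1) ^ (k + 1)) =
          C ((k : ℚ) + 1) * ((exp ℚ - 1) ^ (k + 1) + (exp ℚ - 1) ^ k) := by
        rw [Derivation.leibniz_pow, map_sub, derivative_exp, Derivation.map_one_eq_zero, sub_zero,
          Nat.add_sub_cancel, smul_eq_mul, nsmul_eq_mul]
        simp only [map_add, map_natCast, map_one, Nat.cast_add, Nat.cast_one]
        ring
      have hcoeff := congrArg (coeff n) hderiv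
      rw [coeff_derivative, coeff_C_mul, map_add] at hcoeff
      have ih' := ih (k + 1)
      rw [Nat.factorial_succ, Nat.cast_mul] at ih'
      rw [Nat.factorial_succ, Nat.factorial_succ, Nat.stirlingSecond_succ_succ]
      push_cast at ih' ⊢
      linear_combination (n ! : ℚ) * hcoeff + ((k : ℚ) + 1) * ih' + ((k : ℚ) + 1) * ih k

theorem factorial_mul_coeff_E_sub_one_pow (m n k : ℕ) :
    (n ! : ℚ) * coeff n ((E m - 1) ^ k) = k ! * hyperStirling (m + 1) n k := by
  induction m generalizing n k with
  | zero => rw [hyperStirling_one]; exact factorial_mul_coeff_exp_sub_one_pow n k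
  | succ m ih =>
    have hsubst : (E (m + 1) - 1) ^ k = ((exp ℚ - 1) ^ k).subst (E m - 1) := by
      rw [← coe_substAlgHom (HasSubst.of_constantCoeff_zero' (constantCoeff_E_sub_one m)),
        map_pow, map_sub, map_one, coe_substAlgHom, ← E_succ]
    rw [hsubst, coeff_subst_eq_sum_range (constantCoeff_E_sub_one m), mul_sum,
      hyperStirling_succ' (m + 1), Nat.cast_sum, mul_sum]
    refine sum_congr rfl fun i _ => ?_
    rw [Nat.cast_mul, mul_left_comm, ih, mul_left_comm, ← mul_assoc,
      factorial_mul_coeff_exp_sub_one_pow]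
    ring

theorem bell_eq_sum_hyperStirling (m n : ℕ) :
    bell m n = ∑ k ∈ range (n + 1), (hyperStirling m n k : ℚ) := by
  cases m with
  | zero => simp [bell, E, coeff_exp, hyperStirling_zero, Nat.factorial_ne_zero]
  | succ m =>
    rw [bell, E_succ, coeff_subst_eq_sum_range (constantCoeff_E_sub_one m), mul_sum]
    refine sum_congr rfl fun k _ => ?_
    rw [coeff_exp, Algebra.algebraMap_self, RingHom.id_apply, mul_left_comm,
      factorial_mul_coeff_E_sub_one_pow]
    field_simp

open Filter Asymptotics Topology

theorem isLittleO_natCast_add_one_pow {d e : ℕ} (h : d < e) :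
    (fun m : ℕ => ((m : ℝ) + 1) ^ d) =o[atTop] (fun m : ℕ => (m : ℝ) ^ e) := by
  have hlin : (fun x : ℝ => x + 1) =O[atTop] (fun x => x) :=
    (isBigO_refl _ _).add (isLittleO_const_id_atTop (1 : ℝ)).isBigO
  exact ((hlin.pow d).trans_isLittleO (isLittleO_pow_pow_atTop_of_lt h)).comp_tendsto
    tendsto_natCast_atTop_atTop

theorem isLittleO_hyperStirling {n k : ℕ} (hk : 2 ≤ k) :
    (fun m => (hyperStirling m n k : ℝ)) =o[atTop] (fun m => (hyperStirling m n 1 : ℝ)) := by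
  rcases lt_or_ge n k with hnk | hkn
  · simp only [hyperStirling_eq_zero_of_lt _ hnk, Nat.cast_zero]
    exact isLittleO_zero _ _
  obtain ⟨c, hc⟩ := exists_hyperStirling_le_pow n
  have hupper : (fun m => (hyperStirling m n k : ℝ)) =O[atTop]
      (fun m : ℕ => ((m : ℝ) + 1) ^ (n - k)) :=
    IsBigO.of_bound ((c : ℝ) ^ (n - k)) <| Eventually.of_forall fun m => by
      rw [Real.norm_natCast, norm_pow, Real.norm_of_nonneg (by positivity), ← mul_pow]
      exact_mod_cast hc m k hkn
  have hlower : (fun m => (m.choose (n - 1) : ℝ)) =O[atTop] (fun m => (hyperStirling m n 1 : ℝ)) :=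
    isBigO_of_le _ fun m => by
      simpa only [Real.norm_natCast, Nat.cast_le] using choose_le_hyperStirling m le_rfl (by omega)
  exact (hupper.trans_isLittleO (isLittleO_natCast_add_one_pow (by omega))).trans_isBigO
    ((isTheta_choose (n - 1)).2.trans hlower)

theorem tendsto_average_hyperStirling {n : ℕ} (hn : 1 ≤ n) :
    Tendsto (fun m => (∑ k ∈ Icc 1 n, (k : ℝ) * hyperStirling m n k) /
      ∑ k ∈ Icc 1 n, (hyperStirling m n k : ℝ)) atTop (𝓝 1) := by
  set T := fun m => ∑ k ∈ Icc 1 n, (hyperStirling m n k : ℝ)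
  have hT : ∀ m, T m ≠ 0 := fun m => (sum_pos' (fun _ _ => by positivity)
    ⟨n, mem_Icc.2 ⟨hn, le_rfl⟩, by simp [hyperStirling_self]⟩).ne'
  have hH1 : (fun m => (hyperStirling m n 1 : ℝ)) =O[atTop] T := isBigO_of_le _ fun m => by
    rw [Real.norm_natCast, Real.norm_of_nonneg (by positivity)]
    exact single_le_sum (f := fun k => (hyperStirling m n k : ℝ)) (fun _ _ => by positivity)
      (mem_Icc.2 ⟨le_rfl, hn⟩)
  have hexcess : (fun m => ∑ k ∈ Icc 1 n, ((k : ℝ) - 1) * hyperStirling m n k) =o[atTop] T := by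
    refine IsLittleO.fun_sum fun k hk => ?_
    rcases (mem_Icc.1 hk).1.eq_or_lt with rfl | hk2
    · simp
    · exact ((isLittleO_hyperStirling hk2).trans_isBigO hH1).const_mul_left _
  have hlim := hexcess.tendsto_div_nhds_zero.const_add 1
  rw [add_zero] at hlim
  refine hlim.congr fun m => ?_
  rw [eq_div_iff (hT m), add_mul, div_mul_cancel₀ _ (hT m)]
  simp only [sub_one_mul, sum_sub_distrib, T]
  ring

/-- for fixed `n ≥ 1`, the average number of outermost blocks
`Aₙ^(m) = (1/Bₙ^(m)) Σ_{k=1}^n k · S^(m)(n,k)` tends to `1` as `m → ∞`. -/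
theorem stmt18 (n : ℕ) (hn : 1 ≤ n) :
    Filter.Tendsto
      (fun m : ℕ =>
        (∑ k ∈ Finset.Icc 1 n, (k : ℚ) * (hyperStirling m n k : ℚ)) / bell m n)
      Filter.atTop (nhds 1) := by
  rw [Rat.isUniformEmbedding_coe_real.isEmbedding.tendsto_nhds_iff, Rat.cast_one]
  refine (tendsto_average_hyperStirling hn).congr fun m => ?_
  have hrange : range (n + 1) = insert 0 (Icc 1 n) := by
    ext i
    simp only [mem_range, mem_insert, mem_Icc]
    omega
  rw [Function.comp_apply, bell_eq_sum_hyperStirling, hrange, sum_insert (by simp),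
    hyperStirling_zero_right _ (by omega)]
  push_cast
  simp
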